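/- arXiv:2111.03131 — 5 statements merged into one kernel-verified Lean document; each statement's English description precedes it below -/
import Mathlib

section
/- Let B be a ℂ-basis of V with ι ∈ B. Then H_{(ι,a,b)} is free as an associative unital ℂ-algebra on the set of pure tensors { x_1⊗⋯⊗x_k ∈ H_{k+1} : k ≥ 0, x_1,…,x_k ∈ B∖{ι} } (the case k = 0 contributing the generator 1₁ ∈ H_1): the canonical ℂ-algebra homomorphism from the free associative ℂ-algebra on this set to H is bijective. -/
open scoped TensorProduct

noncomputable section

namespace PaperCHA

/-- Type synonym for the tensor algebra of `V`, to be equipped with the (non-unital)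
`ι`-insertion multiplication `u ∘ v = u ⊗ ι ⊗ v`. -/
def IotaCore (V : Type) [AddCommGroup V] [Module ℂ V] (_iv : V) : Type := TensorAlgebra ℂ V

section Core

variable {V : Type} [AddCommGroup V] [Module ℂ V] {iv : V}

instance : AddCommGroup (IotaCore V iv) := inferInstanceAs (AddCommGroup (TensorAlgebra ℂ V))
instance : Module ℂ (IotaCore V iv) := inferInstanceAs (Module ℂ (TensorAlgebra ℂ V))

/-- The identity map, regarding an element of the tensor algebra as an element of
`IotaCore V iv`. -/
def IotaCore.ofT (iv : V) : TensorAlgebra ℂ V → IotaCore V iv := id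

/-- The identity map, regarding an element of `IotaCore V iv` as an element of the
tensor algebra. -/
def IotaCore.toT : IotaCore V iv → TensorAlgebra ℂ V := id

instance : NonUnitalRing (IotaCore V iv) :=
  { (inferInstanceAs (AddCommGroup (IotaCore V iv)) : AddCommGroup (IotaCore V iv)) with
    mul := fun u v => IotaCore.ofT iv (IotaCore.toT u * TensorAlgebra.ι ℂ iv * IotaCore.toT v)
    left_distrib := fun u v w => by
      show IotaCore.toT u * TensorAlgebra.ι ℂ iv * (IotaCore.toT v + IotaCore.toT w)
          = IotaCore.toT u * TensorAlgebra.ι ℂ iv * IotaCore.toT v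
            + IotaCore.toT u * TensorAlgebra.ι ℂ iv * IotaCore.toT w
      rw [mul_add]
    right_distrib := fun u v w => by
      show (IotaCore.toT u + IotaCore.toT v) * TensorAlgebra.ι ℂ iv * IotaCore.toT w
          = IotaCore.toT u * TensorAlgebra.ι ℂ iv * IotaCore.toT w
            + IotaCore.toT v * TensorAlgebra.ι ℂ iv * IotaCore.toT w
      rw [add_mul, add_mul]
    zero_mul := fun u => by
      show (0 : TensorAlgebra ℂ V) * TensorAlgebra.ι ℂ iv * IotaCore.toT u = 0
      rw [zero_mul, zero_mul]
    mul_zero := fun u => by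
      show IotaCore.toT u * TensorAlgebra.ι ℂ iv * (0 : TensorAlgebra ℂ V) = 0
      rw [mul_zero]
    mul_assoc := fun u v w => by
      show IotaCore.toT u * TensorAlgebra.ι ℂ iv * IotaCore.toT v * TensorAlgebra.ι ℂ iv
            * IotaCore.toT w
          = IotaCore.toT u * TensorAlgebra.ι ℂ iv
            * (IotaCore.toT v * TensorAlgebra.ι ℂ iv * IotaCore.toT w)
      simp only [mul_assoc] }

instance : SMulCommClass ℂ (IotaCore V iv) (IotaCore V iv) :=
  ⟨fun c u v => by
    show c • (IotaCore.toT u * TensorAlgebra.ι ℂ iv * IotaCore.toT v)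
        = IotaCore.toT u * TensorAlgebra.ι ℂ iv * (c • IotaCore.toT v)
    rw [mul_smul_comm]⟩

instance : IsScalarTower ℂ (IotaCore V iv) (IotaCore V iv) :=
  ⟨fun c u v => by
    show (c • IotaCore.toT u) * TensorAlgebra.ι ℂ iv * IotaCore.toT v
        = c • (IotaCore.toT u * TensorAlgebra.ι ℂ iv * IotaCore.toT v)
    rw [smul_mul_assoc, smul_mul_assoc]⟩

end Core

/-- The Hopf algebra `H_{(ι,a,b)}` of the paper, as a graded algebra: the unitalization
of the tensor algebra of `V` equipped with the `ι`-insertion product.  Its `n`-th graded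
component (`n ≥ 1`) is `V^{⊗(n-1)}`, and the `0`-th is `ℂ·1`. -/
abbrev HAlg (V : Type) [AddCommGroup V] [Module ℂ V] (iv : V) : Type :=
  Unitization ℂ (IotaCore V iv)

section HAlg

variable {V : Type} [AddCommGroup V] [Module ℂ V]

/-- The pure tensor `x₁ ⊗ ⋯ ⊗ x_{n-1} ∈ H_n` associated to a list `[x₁, …, x_{n-1}]`
(the empty list gives `1₁ ∈ H_1`). -/
def pt (iv : V) (l : List V) : HAlg V iv :=
  Unitization.inr (IotaCore.ofT iv ((l.map (TensorAlgebra.ι ℂ)).prod))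

/-- The grading of `H`: `grade iv 0 = ℂ·1` and `grade iv (n+1)` is the span of the
pure tensors of `n` vectors, i.e. `V^{⊗ n}`. -/
def grade (iv : V) : ℕ → Submodule ℂ (HAlg V iv)
  | 0 => Submodule.span ℂ {1}
  | (n + 1) => Submodule.span ℂ {x | ∃ l : List V, l.length = n ∧ x = pt iv l}

/-- The linear projection `ε : H → ℂ` onto the degree-zero component `H_0 = ℂ·1`. -/
def eps (iv : V) : HAlg V iv →ₗ[ℂ] ℂ :=
  (Unitization.fstHom ℂ (IotaCore V iv)).toLinearMap

/-- Auxiliary function computing `T_φ(S; ψ)` on the sorted list `s₁ < ⋯ < s_k` of a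
nonempty subset `S ⊆ {1, …, n}`: returns the scalar `c` (together with all scalar factors
`φ(ψ_{s_i})` coming from non-consecutive entries) and the list `[v₁, …, v_{k-1}]`. -/
def Tlist (iv : V) (φ : V →ₗ[ℂ] ℂ) (ψ : ℕ → V) (n : ℕ) : List ℕ → ℂ × List V
  | [] => (1, [])
  | [s] => (if s = n then 1 else φ (ψ s), [])
  | s :: t :: rest =>
    let p := Tlist iv φ ψ n (t :: rest)
    if t = s + 1 then (p.1, ψ s :: p.2) else (φ (ψ s) * p.1, iv :: p.2)

/-- The element `T_φ(S; ψ) ∈ H` for a subset `S ⊆ {1, …, n}` (one gets `1 ∈ H_0` for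
`S = ∅`, and `c • (v₁ ⊗ ⋯ ⊗ v_{k-1}) ∈ H_k` for `S = {s₁ < ⋯ < s_k}`). -/
def Tfun (iv : V) (φ : V →ₗ[ℂ] ℂ) (ψ : ℕ → V) (n : ℕ) (S : Finset ℕ) : HAlg V iv :=
  if S = ∅ then 1
  else (Tlist iv φ ψ n (S.sort (· ≤ ·))).1 • pt iv (Tlist iv φ ψ n (S.sort (· ≤ ·))).2

/-- The indexing `ψ : {1, …, n} → V` (1-based) associated to a list `[ψ₁, …, ψ_{n-1}]`. -/
def psiOf (l : List V) : ℕ → V := fun j => l.getD (j - 1) 0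

/-- The defining property of the coproduct `Δ` of `H_{(ι,a,b)}`: `Δ(1) = 1 ⊗ 1` and, on
a pure tensor `ψ = ψ₁ ⊗ ⋯ ⊗ ψ_{n-1} ∈ H_n`,
`Δ(ψ) = ∑_{A ⊆ {1,…,n}} T_a(A; ψ) ⊗ T_b(Aᶜ; ψ)`. -/
def DeltaSpec (iv : V) (a b : V →ₗ[ℂ] ℂ)
    (Δ : HAlg V iv →ₗ[ℂ] HAlg V iv ⊗[ℂ] HAlg V iv) : Prop :=
  Δ 1 = 1 ⊗ₜ[ℂ] 1 ∧
  ∀ l : List V,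
    Δ (pt iv l) =
      ∑ A ∈ (Finset.Icc 1 (l.length + 1)).powerset,
        Tfun iv a (psiOf l) (l.length + 1) A ⊗ₜ[ℂ]
          Tfun iv b (psiOf l) (l.length + 1) (Finset.Icc 1 (l.length + 1) \ A)

end HAlg

end PaperCHA

/-!
The positive part of `H` is the tensor algebra `T(V)` with the product `u ∘ v = u ⊗ ι ⊗ v`.
Cutting a word in `B` at every letter `ι` identifies the words with the nonempty sequences of
`ι`-free words, and turns `∘` into concatenation of sequences. So the linear map sending a word
to the product of its `ι`-free pieces in the free algebra is multiplicative, and inverse to the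
canonical map.
-/

namespace List

theorem induction_on_separator {α : Type*} {P : List α → Prop} (a : α) (l : List α)
    (not_mem : ∀ l, a ∉ l → P l) (append_cons : ∀ u v, P u → P v → P (u ++ a :: v)) :
    P l := by
  induction h : l.length using Nat.strong_induction_on generalizing l with
  | _ n ih =>
    by_cases ha : a ∈ l
    · obtain ⟨u, v, rfl⟩ := append_of_mem ha
      simp only [length_append, length_cons] at h
      exact append_cons u v (ih _ (by omega) u rfl) (ih _ (by omega) v rfl)
    · exact not_mem l ha

theorem prod_map_append_cons {α M : Type*} [Monoid M] (f : α → M) (u v : List α) (a : α) :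
    ((u ++ a :: v).map f).prod = (u.map f).prod * f a * (v.map f).prod := by
  simp [prod_append, mul_assoc]

theorem forall_mem_map_subtype_val {α : Type*} {s : Set α} (l : List s) :
    ∀ x ∈ l.map Subtype.val, x ∈ s := fun _ hx => by
  obtain ⟨i, -, rfl⟩ := mem_map.1 hx
  exact i.2

end List

theorem FreeAlgebra.basisFreeMonoid_apply (R X : Type*) [CommSemiring R] (w : FreeMonoid X) :
    FreeAlgebra.basisFreeMonoid R X w = (w.toList.map (FreeAlgebra.ι R)).prod := by
  simp [basisFreeMonoid, equivMonoidAlgebraFreeMonoid, FreeMonoid.lift_apply]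

theorem Module.Basis.tensorAlgebra_apply {κ R M : Type*} [CommSemiring R] [AddCommMonoid M]
    [Module R M] (b : Basis κ R M) (w : FreeMonoid κ) :
    b.tensorAlgebra w = (w.toList.map fun i => TensorAlgebra.ι R (b i)).prod := by
  simp [Basis.tensorAlgebra, FreeAlgebra.basisFreeMonoid_apply, map_list_prod, Function.comp_def]

theorem Module.Basis.tensorAlgebra_apply_of_coe {R M : Type*} [CommSemiring R] [AddCommMonoid M]
    [Module R M] {B : Set M} {b : Basis B R M} (hb : ⇑b = Subtype.val) (w : FreeMonoid B) :
    b.tensorAlgebra w = ((w.toList.map (↑)).map (TensorAlgebra.ι R)).prod := by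
  simp [b.tensorAlgebra_apply, hb]

namespace PaperCHA

variable {V : Type} [AddCommGroup V] [Module ℂ V] (iv : V)

theorem pt_mul_pt (u v : List V) : pt iv u * pt iv v = pt iv (u ++ iv :: v) := by
  rw [pt, pt, pt, ← Unitization.inr_mul, List.prod_map_append_cons]
  rfl

variable (B : Set V)

abbrev IotaFreePureTensor : Type :=
  {x : HAlg V iv // ∃ l : List V, (∀ v ∈ l, v ∈ B \ {iv}) ∧ x = pt iv l}

open Classical in
/-- Junk value `0` unless the entries of `p` lie in `B \ {iv}`. -/
def freeGen (p : List V) : FreeAlgebra ℂ (IotaFreePureTensor iv B) :=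
  if h : ∀ v ∈ p, v ∈ B \ {iv} then FreeAlgebra.ι ℂ ⟨pt iv p, p, h, rfl⟩ else 0

open Classical in
/-- Cut `l` at every `iv` and multiply the pieces as generators: the inverse of the canonical map
on pure tensors. -/
def pieceProd (l : List V) : FreeAlgebra ℂ (IotaFreePureTensor iv B) :=
  ((l.splitOn iv).map (freeGen iv B)).prod

theorem pieceProd_append_cons (u v : List V) :
    pieceProd iv B (u ++ iv :: v) = pieceProd iv B u * pieceProd iv B v := by
  classical
  rw [pieceProd, List.splitOn_append_cons_self, List.map_append, List.prod_append]
  rfl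

theorem pieceProd_eq_ι (l : List V) (hl : ∀ v ∈ l, v ∈ B \ {iv}) :
    pieceProd iv B l = FreeAlgebra.ι ℂ ⟨pt iv l, l, hl, rfl⟩ := by
  classical
  rw [pieceProd, List.splitOn_eq_singleton fun h => (hl iv h).2 rfl, List.map_singleton,
    List.prod_singleton, freeGen, dif_pos hl]

theorem lift_pieceProd (l : List V) (hl : ∀ v ∈ l, v ∈ B) :
    FreeAlgebra.lift ℂ Subtype.val (pieceProd iv B l) = pt iv l := by
  induction l using List.induction_on_separator iv with
  | not_mem l hiv =>
    rw [pieceProd_eq_ι iv B l fun v hv => ⟨hl v hv, fun h => hiv (h ▸ hv)⟩,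
      FreeAlgebra.lift_ι_apply]
  | append_cons u v hu hv =>
    simp only [List.mem_append, List.mem_cons] at hl
    rw [pieceProd_append_cons, map_mul, hu fun x hx => hl x (.inl hx),
      hv fun x hx => hl x (.inr (.inr hx)), pt_mul_pt]

variable {B} (b : Module.Basis B ℂ V)

def pieceProdLin : TensorAlgebra ℂ V →ₗ[ℂ] FreeAlgebra ℂ (IotaFreePureTensor iv B) :=
  b.tensorAlgebra.constr ℂ fun w => pieceProd iv B (w.toList.map (↑))

variable {b}

theorem pieceProdLin_prod (hb : ⇑b = Subtype.val) (l : List V) (hl : ∀ v ∈ l, v ∈ B) :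
    pieceProdLin iv b (l.map (TensorAlgebra.ι ℂ)).prod = pieceProd iv B l := by
  lift l to List B using hl
  have := b.tensorAlgebra.constr_basis ℂ (fun w => pieceProd iv B (w.toList.map (↑)))
    (FreeMonoid.ofList l)
  simpa [pieceProdLin, Module.Basis.tensorAlgebra_apply, hb, Function.comp_def] using this

theorem pieceProdLin_mul (hb : ⇑b = Subtype.val) (hivB : iv ∈ B) (x y : TensorAlgebra ℂ V) :
    pieceProdLin iv b (x * TensorAlgebra.ι ℂ iv * y) =
      pieceProdLin iv b x * pieceProdLin iv b y := by
  let L₁ := (LinearMap.mul ℂ _ ∘ₗ LinearMap.mulRight ℂ (TensorAlgebra.ι ℂ iv)).compr₂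
    (pieceProdLin iv b)
  let L₂ := (LinearMap.mul ℂ _).compl₁₂ (pieceProdLin iv b) (pieceProdLin iv b)
  have : L₁ = L₂ := LinearMap.ext_basis b.tensorAlgebra b.tensorAlgebra fun w₁ w₂ => by
    have hw (w : FreeMonoid B) := List.forall_mem_map_subtype_val w.toList
    show pieceProdLin iv b (b.tensorAlgebra w₁ * TensorAlgebra.ι ℂ iv * b.tensorAlgebra w₂) =
      pieceProdLin iv b (b.tensorAlgebra w₁) * pieceProdLin iv b (b.tensorAlgebra w₂)
    rw [b.tensorAlgebra_apply_of_coe hb, b.tensorAlgebra_apply_of_coe hb,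
      ← List.prod_map_append_cons, pieceProdLin_prod iv hb _ (hw w₁),
      pieceProdLin_prod iv hb _ (hw w₂), pieceProdLin_prod iv hb _
        (List.forall_mem_append.2 ⟨hw w₁, List.forall_mem_cons.2 ⟨hivB, hw w₂⟩⟩),
      pieceProd_append_cons]
  exact LinearMap.congr_fun₂ this x y

variable (hb : ⇑b = Subtype.val) (hivB : iv ∈ B)

def pieceProdHom : HAlg V iv →ₐ[ℂ] FreeAlgebra ℂ (IotaFreePureTensor iv B) :=
  Unitization.lift
    { pieceProdLin iv b with
      map_zero' := (pieceProdLin iv b).map_zero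
      map_mul' := pieceProdLin_mul iv hb hivB }

theorem pieceProdHom_inr (a : IotaCore V iv) :
    pieceProdHom iv hb hivB a = pieceProdLin iv b (IotaCore.toT a) := by
  simp only [pieceProdHom, Unitization.lift_apply, NonUnitalAlgHom.toAlgHom_apply,
    Unitization.fst_inr, Unitization.snd_inr, map_zero, zero_add]
  rfl

theorem pieceProdHom_pt (l : List V) (hl : ∀ v ∈ l, v ∈ B) :
    pieceProdHom iv hb hivB (pt iv l) = pieceProd iv B l := by
  rw [pt, pieceProdHom_inr]
  exact pieceProdLin_prod iv hb l hl

theorem pieceProdHom_comp_lift :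
    (pieceProdHom iv hb hivB).comp (FreeAlgebra.lift ℂ Subtype.val) = AlgHom.id ℂ _ := by
  ext ⟨x, l, hl, rfl⟩
  simp [pieceProdHom_pt iv hb hivB l fun v hv => (hl v hv).1, pieceProd_eq_ι iv B l hl]

theorem lift_comp_pieceProdHom :
    (FreeAlgebra.lift ℂ Subtype.val).comp (pieceProdHom iv hb hivB) = AlgHom.id ℂ _ := by
  have : (FreeAlgebra.lift ℂ Subtype.val).toLinearMap ∘ₗ pieceProdLin iv b =
      (Unitization.inrHom ℂ ℂ (IotaCore V iv) :
        TensorAlgebra ℂ V →ₗ[ℂ] HAlg V iv) := b.tensorAlgebra.ext fun w => by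
    have hw := List.forall_mem_map_subtype_val w.toList
    rw [LinearMap.comp_apply, b.tensorAlgebra_apply_of_coe hb, pieceProdLin_prod iv hb _ hw]
    exact lift_pieceProd iv B _ hw
  exact Unitization.algHom_ext'' fun a => by
    rw [AlgHom.comp_apply, pieceProdHom_inr, AlgHom.id_apply]
    exact LinearMap.congr_fun this a

end PaperCHA

open PaperCHA in
/-- **Proposition 3.7 (freeness):** if `B` is a `ℂ`-basis of `V` containing `ι`, then
`H_{(ι,a,b)}` is free as an associative unital `ℂ`-algebra on the set of pure tensors
`x₁ ⊗ ⋯ ⊗ x_k` with all `xᵢ ∈ B ∖ {ι}` (`k ≥ 0`, the case `k = 0` giving `1₁ ∈ H_1`):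
the canonical map from the free associative `ℂ`-algebra on this set is bijective. -/
theorem free_on_iota_free_pure_tensors
    {V : Type} [AddCommGroup V] [Module ℂ V] (iv : V)
    (B : Set V) (hBli : LinearIndependent ℂ ((↑) : B → V))
    (hBsp : Submodule.span ℂ B = ⊤) (hivB : iv ∈ B) :
    Function.Bijective
      ⇑(FreeAlgebra.lift ℂ
        (Subtype.val :
          {x : HAlg V iv // ∃ l : List V, (∀ v ∈ l, v ∈ B \ {iv}) ∧ x = pt iv l} →
          HAlg V iv)) := by
  let b : Module.Basis B ℂ V := .mk hBli (by rw [Subtype.range_coe]; exact hBsp.ge)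
  have hb : ⇑b = Subtype.val := Module.Basis.coe_mk _ _
  exact (AlgEquiv.ofAlgHom _ (pieceProdHom iv hb hivB) (lift_comp_pieceProdHom iv hb hivB)
    (pieceProdHom_comp_lift iv hb hivB)).bijective
end
end

section
/- Assume a = b and a(ι) = 1, and let f : H → ℂ be the linear character with f(1) = 1 and f(γ_1⊗⋯⊗γ_{n−1}) = Π_{i=1}^{n−1} a(γ_i) for n ≥ 1 and γ_1,…,γ_{n−1} ∈ V (so f(1₁) = 1). Then f has a convolution inverse f^{−1}, and f is odd: f^{−1}(x) = (−1)^n f(x) for every n ≥ 0 and every x ∈ H_n. -/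
open scoped TensorProduct

noncomputable section

/-!
For `ψ ∈ H_n` put `S = {1, …, n}`, `G i = a(ψ_i)` for `i < n` and `G n = 1`. With `a(ι) = 1`
and `a = b`, the character `f` sends every term `T_a(A; ψ)` of `Δ(ψ)` to `∏_{i ∈ A} G i`, and
the functional `g` with `g(x) = (-1)^n f(x)` on `H_n` sends it to `∏_{i ∈ A} (-G i)`. Hence
both `f ∗ g` and `g ∗ f` evaluate `ψ` to
`∑_{A ⊆ S} ∏_{A} (±G) ∏_{S \ A} (∓G) = ∏_{i ∈ S} (G i - G i) = 0`, so `g` is the convolution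
inverse of `f`.
-/

namespace PaperCHA

variable {V : Type} [AddCommGroup V] [Module ℂ V] {iv : V}

lemma span_range_prod_map_ι :
    Submodule.span ℂ (Set.range fun l : List V => (l.map (TensorAlgebra.ι ℂ)).prod) = ⊤ := by
  have h := Algebra.toSubmodule_eq_top.2 (TensorAlgebra.adjoin_range_ι (R := ℂ) (M := V))
  rw [Algebra.adjoin_eq_span] at h
  rw [eq_top_iff, ← h]
  refine Submodule.span_mono fun x hx => ?_
  induction hx using Submonoid.closure_induction with
  | mem _ hv => obtain ⟨v, rfl⟩ := hv; exact ⟨[v], by simp⟩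
  | one => exact ⟨[], by simp⟩
  | mul _ _ _ _ hx hy =>
    obtain ⟨l, rfl⟩ := hx
    obtain ⟨m, rfl⟩ := hy
    exact ⟨l ++ m, by simp⟩

def IotaCore.linearEquivT (iv : V) : IotaCore V iv ≃ₗ[ℂ] TensorAlgebra ℂ V :=
  LinearEquiv.refl ℂ (TensorAlgebra ℂ V)

lemma span_pt_union_one (iv : V) :
    Submodule.span ℂ (Set.range (pt iv) ∪ {1}) = ⊤ := by
  rw [eq_top_iff]
  rintro x -
  rw [← Unitization.inl_fst_add_inr_snd_eq x]
  refine Submodule.add_mem _ ?_ ?_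
  · rw [← Unitization.algebraMap_eq_inl, Algebra.algebraMap_eq_smul_one]
    exact Submodule.smul_mem _ _ (Submodule.subset_span (Or.inr rfl))
  · have hx : IotaCore.linearEquivT iv x.snd ∈ Submodule.span ℂ
        (Set.range fun l : List V => (l.map (TensorAlgebra.ι ℂ)).prod) := by
      rw [span_range_prod_map_ι]; trivial
    have hmap := Submodule.mem_map_of_mem
      (f := Unitization.inrHom ℂ ℂ (IotaCore V iv) ∘ₗ (IotaCore.linearEquivT iv).symm) hx
    rw [Submodule.map_span] at hmap
    refine Submodule.span_mono ?_ hmap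
    rintro _ ⟨_, ⟨l, rfl⟩, rfl⟩
    exact Or.inl ⟨l, rfl⟩

-- `(-1)^n` times the character of `a` on `H_n`: a sign from each of the `n - 1` tensor factors
-- and one from the subtraction.
def signedChar (iv : V) (a : V →ₗ[ℂ] ℂ) : HAlg V iv →ₗ[ℂ] ℂ :=
  eps iv - (TensorAlgebra.lift ℂ (-a)).toLinearMap ∘ₗ (IotaCore.linearEquivT iv).toLinearMap ∘ₗ
    Unitization.sndHom ℂ ℂ (IotaCore V iv)

lemma signedChar_apply (a : V →ₗ[ℂ] ℂ) (x : HAlg V iv) :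
    signedChar iv a x = x.fst - TensorAlgebra.lift ℂ (-a) (IotaCore.linearEquivT iv x.snd) :=
  rfl

lemma signedChar_one (a : V →ₗ[ℂ] ℂ) : signedChar iv a 1 = 1 := by
  simp [signedChar_apply]

lemma signedChar_pt (a : V →ₗ[ℂ] ℂ) (l : List V) :
    signedChar iv a (pt iv l) = (-1) ^ (l.length + 1) * (l.map a).prod := by
  change (0 : ℂ) - TensorAlgebra.lift ℂ (-a) (l.map (TensorAlgebra.ι ℂ)).prod = _
  have hneg : l.map (TensorAlgebra.lift ℂ (-a) ∘ TensorAlgebra.ι ℂ) = (l.map a).map Neg.neg := by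
    simp [Function.comp_def]
  rw [map_list_prod, List.map_map, hneg, List.prod_map_neg, List.length_map, pow_succ]
  ring

lemma signedChar_eq_neg_one_pow_mul {a : V →ₗ[ℂ] ℂ} {φ : HAlg V iv →ₗ[ℂ] ℂ} (h1 : φ 1 = 1)
    (hpt : ∀ l, φ (pt iv l) = (l.map a).prod) {n : ℕ} {x : HAlg V iv} (hx : x ∈ grade iv n) :
    signedChar iv a x = (-1) ^ n * φ x := by
  cases n with
  | zero =>
    refine LinearMap.eqOn_span (g := (-1 : ℂ) ^ 0 • φ) ?_ hx
    rintro _ rfl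
    simp [signedChar_one, h1]
  | succ m =>
    refine LinearMap.eqOn_span (g := (-1 : ℂ) ^ (m + 1) • φ) ?_ hx
    rintro _ ⟨l, rfl, rfl⟩
    simp [signedChar_pt, hpt]

-- Position `n` carries no tensor factor of `ψ`.
def Tweight (a : V →ₗ[ℂ] ℂ) (ψ : ℕ → V) (n i : ℕ) : ℂ :=
  if i = n then 1 else a (ψ i)

lemma Tlist_snd_length (φ : V →ₗ[ℂ] ℂ) (ψ : ℕ → V) (n : ℕ) (s : ℕ) (rest : List ℕ) :
    (Tlist iv φ ψ n (s :: rest)).2.length = rest.length := by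
  induction rest generalizing s with
  | nil => rfl
  | cons t rest ih =>
    rw [Tlist]
    split_ifs <;> simp [ih]

-- `a(ι) = 1` makes a gap in `s` cost exactly the factor `a(ψ_s)` that it moves into the scalar.
lemma Tlist_fst_mul_prod {a : V →ₗ[ℂ] ℂ} (ha : a iv = 1) (ψ : ℕ → V) {n : ℕ} {s : List ℕ}
    (hs : s.IsChain (· < ·)) (hsn : ∀ i ∈ s, i ≤ n) :
    (Tlist iv a ψ n s).1 * ((Tlist iv a ψ n s).2.map a).prod = (s.map (Tweight a ψ n)).prod := by
  induction s with
  | nil => simp [Tlist]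
  | cons s rest ih =>
    cases rest with
    | nil => simp [Tlist, Tweight]
    | cons t rest =>
      obtain ⟨hst, hs'⟩ := List.isChain_cons_cons.mp hs
      have hsn' : s ≠ n := (hst.trans_le (hsn t (by simp))).ne
      have ih' := ih hs' fun i hi => hsn i (List.mem_cons_of_mem _ hi)
      rw [List.map_cons, List.prod_cons, ← ih', Tweight, if_neg hsn', Tlist]
      split_ifs <;> simp only [List.map_cons, List.prod_cons, ha] <;> ring

lemma map_Tfun {a : V →ₗ[ℂ] ℂ} (ha : a iv = 1) {φ : HAlg V iv →ₗ[ℂ] ℂ} {σ : ℂ} (h1 : φ 1 = 1)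
    (hpt : ∀ l, φ (pt iv l) = σ ^ (l.length + 1) * (l.map a).prod) (ψ : ℕ → V) {n : ℕ}
    {A : Finset ℕ} (hA : ∀ i ∈ A, i ≤ n) :
    φ (Tfun iv a ψ n A) = ∏ i ∈ A, σ * Tweight a ψ n i := by
  rcases A.eq_empty_or_nonempty with rfl | hne
  · simp [Tfun, h1]
  obtain ⟨s, rest, hsort⟩ : ∃ s rest, A.sort (· ≤ ·) = s :: rest := by
    refine List.exists_cons_of_ne_nil fun h => hne.card_ne_zero ?_
    rw [← Finset.length_sort (· ≤ ·), h, List.length_nil]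
  have hcard : (Tlist iv a ψ n (A.sort (· ≤ ·))).2.length + 1 = A.card := by
    rw [← Finset.length_sort (· ≤ ·), hsort, Tlist_snd_length, List.length_cons]
  have hprod := Tlist_fst_mul_prod (iv := iv) ha ψ (Finset.sortedLT_sort A).isChain
    fun i hi => hA i ((Finset.mem_sort _).1 hi)
  rw [((Finset.sort_perm_toList A (· ≤ ·)).map _).prod_eq, Finset.prod_map_toList] at hprod
  rw [Finset.prod_mul_distrib, Finset.prod_const, ← hprod, Tfun, if_neg hne.ne_empty,
    map_smul, hpt, hcard, smul_eq_mul]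
  ring

lemma convolution_pt_eq_zero {a : V →ₗ[ℂ] ℂ} (ha : a iv = 1)
    {Δ : HAlg V iv →ₗ[ℂ] HAlg V iv ⊗[ℂ] HAlg V iv} (hΔ : DeltaSpec iv a a Δ)
    {φ₁ φ₂ : HAlg V iv →ₗ[ℂ] ℂ} {σ₁ σ₂ : ℂ} (h₁ : φ₁ 1 = 1) (h₂ : φ₂ 1 = 1)
    (hpt₁ : ∀ l, φ₁ (pt iv l) = σ₁ ^ (l.length + 1) * (l.map a).prod)
    (hpt₂ : ∀ l, φ₂ (pt iv l) = σ₂ ^ (l.length + 1) * (l.map a).prod) (hσ : σ₁ + σ₂ = 0)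
    (l : List V) :
    TensorProduct.lid ℂ ℂ (TensorProduct.map φ₁ φ₂ (Δ (pt iv l))) = 0 := by
  classical
  have hA : ∀ A ∈ (Finset.Icc 1 (l.length + 1)).powerset, ∀ i ∈ A, i ≤ l.length + 1 :=
    fun _ hB _ hi => (Finset.mem_Icc.1 (Finset.mem_powerset.1 hB hi)).2
  rw [hΔ.2 l, map_sum, map_sum]
  simp only [TensorProduct.map_tmul, TensorProduct.lid_tmul, smul_eq_mul]
  rw [Finset.sum_congr rfl fun A hA' => by
    rw [map_Tfun ha h₁ hpt₁ _ (hA A hA'), map_Tfun ha h₂ hpt₂ _ fun i hi =>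
      (Finset.mem_Icc.1 (Finset.sdiff_subset hi)).2], ← Finset.prod_add]
  exact Finset.prod_eq_zero (i := 1) (by simp) (by rw [← add_mul, hσ, zero_mul])

lemma convolution_eq_eps {a : V →ₗ[ℂ] ℂ} (ha : a iv = 1)
    {Δ : HAlg V iv →ₗ[ℂ] HAlg V iv ⊗[ℂ] HAlg V iv} (hΔ : DeltaSpec iv a a Δ)
    {φ₁ φ₂ : HAlg V iv →ₗ[ℂ] ℂ} {σ₁ σ₂ : ℂ} (h₁ : φ₁ 1 = 1) (h₂ : φ₂ 1 = 1)
    (hpt₁ : ∀ l, φ₁ (pt iv l) = σ₁ ^ (l.length + 1) * (l.map a).prod)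
    (hpt₂ : ∀ l, φ₂ (pt iv l) = σ₂ ^ (l.length + 1) * (l.map a).prod) (hσ : σ₁ + σ₂ = 0)
    (x : HAlg V iv) :
    TensorProduct.lid ℂ ℂ (TensorProduct.map φ₁ φ₂ (Δ x)) = eps iv x := by
  suffices TensorProduct.lid ℂ ℂ ∘ₗ TensorProduct.map φ₁ φ₂ ∘ₗ Δ = eps iv from
    LinearMap.congr_fun this x
  refine LinearMap.ext_on (span_pt_union_one iv) ?_
  rintro _ (⟨l, rfl⟩ | rfl)
  · exact convolution_pt_eq_zero ha hΔ h₁ h₂ hpt₁ hpt₂ hσ l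
  · simp [hΔ.1, h₁, h₂, eps]

end PaperCHA

open PaperCHA in
/-- **Corollary 5.5 (oddness):** if `a = b` and `a(ι) = 1`, the linear character `f` of
`H_{(ι,a,b)}` with `f(γ₁⊗⋯⊗γ_{n-1}) = ∏ᵢ a(γᵢ)` has a convolution inverse `f⁻¹`, and
`f` is odd: `f⁻¹(x) = (−1)ⁿ f(x)` for every `x` in the `n`-th graded component. -/
theorem supported_character_is_odd
    {V : Type} [AddCommGroup V] [Module ℂ V] (iv : V) (a b : V →ₗ[ℂ] ℂ)
    (hab : a = b) (ha : a iv = 1)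
    (Δ : HAlg V iv →ₗ[ℂ] HAlg V iv ⊗[ℂ] HAlg V iv) (hΔ : DeltaSpec iv a b Δ)
    (f : HAlg V iv →ₐ[ℂ] ℂ) (hf : ∀ l : List V, f (pt iv l) = (l.map a).prod) :
    ∃ g : HAlg V iv →ₗ[ℂ] ℂ,
      (∀ x : HAlg V iv,
        TensorProduct.lid ℂ ℂ (TensorProduct.map f.toLinearMap g (Δ x)) = eps iv x) ∧
      (∀ x : HAlg V iv,
        TensorProduct.lid ℂ ℂ (TensorProduct.map g f.toLinearMap (Δ x)) = eps iv x) ∧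
      ∀ (n : ℕ) (x : HAlg V iv), x ∈ grade iv n → g x = (-1 : ℂ) ^ n * f x := by
  subst hab
  have hf1 : ∀ l, f.toLinearMap (pt iv l) = 1 ^ (l.length + 1) * (l.map a).prod := fun l => by
    rw [one_pow, one_mul]
    exact hf l
  refine ⟨signedChar iv a, ?_, ?_, fun n x hx =>
    signedChar_eq_neg_one_pow_mul (φ := f.toLinearMap) (map_one f) hf hx⟩
  · exact convolution_eq_eps ha hΔ (map_one f) (signedChar_one a) hf1 (signedChar_pt a)
      (add_neg_cancel 1)
  · exact convolution_eq_eps ha hΔ (signedChar_one a) (map_one f) (signedChar_pt a) hf1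
      (neg_add_cancel 1)
end
end

section
/- For every n ≥ 1, the number of set compositions of {1,…,n} with no toggle point equals 3^{n−1}. -/
namespace PaperSetComp

/-- `L` is a set composition of `{1, …, n}`: a tuple of nonempty pairwise disjoint
subsets whose union is `{1, …, n}`. -/
def IsSetComposition (n : ℕ) (L : List (Finset ℕ)) : Prop :=
  (∀ A ∈ L, A.Nonempty) ∧ L.Pairwise Disjoint ∧ L.foldr (· ∪ ·) ∅ = Finset.Icc 1 n

/-- `j` is a split toggle point of `L`: for the block `A_k` containing `j`, `j = max A_k`,
`A_{k+1}` exists, and `min A_{k+1} > j + 1`. -/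
def IsSplitToggle (L : List (Finset ℕ)) (j : ℕ) : Prop :=
  ∃ k : ℕ, k + 1 < L.length ∧ j ∈ L.getD k ∅ ∧ (∀ x ∈ L.getD k ∅, x ≤ j) ∧
    ∀ y ∈ L.getD (k + 1) ∅, j + 1 < y

/-- `j` is a fused toggle point of `L`: for the block `A_k` containing `j`, `j < max A_k`
and `j + 1 ∉ A_k`. -/
def IsFusedToggle (L : List (Finset ℕ)) (j : ℕ) : Prop :=
  ∃ k : ℕ, k < L.length ∧ j ∈ L.getD k ∅ ∧ (∃ x ∈ L.getD k ∅, j < x) ∧ j + 1 ∉ L.getD k ∅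

/-- `j` is a toggle point of `L`. -/
def IsToggle (L : List (Finset ℕ)) (j : ℕ) : Prop :=
  IsSplitToggle L j ∨ IsFusedToggle L j

end PaperSetComp

/-!
A set composition has no fused toggle exactly when its blocks are intervals, and then no split
toggle exactly when every block `B` following a block `A` has `min B ≤ max A + 1`. In such a
composition of `{1, …, n + 1}` with `n ≥ 1`, the element `n + 1` either is the top of the block
containing `n`, or forms a singleton block right after that block, or forms a singleton first
block; deleting `n + 1` inverts all three insertions. So the count is multiplied by `3` at each
step, starting from the single composition of `{1}`.
-/

theorem List.IsChain.replace_of_imp {α : Type*} {r : α → α → Prop} {s t : List α} {c c' : α}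
    (h : (s ++ c :: t).IsChain r) (hs : ∀ a ∈ s.getLast?, r a c → r a c')
    (ht : ∀ b ∈ t.head?, r c b → r c' b) : (s ++ c' :: t).IsChain r := by
  rw [List.isChain_append, List.isChain_cons] at h ⊢
  obtain ⟨hs', ⟨hct, ht'⟩, hlink⟩ := h
  refine ⟨hs', ⟨fun b hb => ht b hb (hct b hb), ht'⟩, fun a ha b hb => ?_⟩
  obtain rfl : b = c' := by simpa using hb.symm
  exact hs a ha (hlink a ha c rfl)

namespace PaperSetComp

open Finset

section Partition

variable {α : Type*} [DecidableEq α]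

def IsBlockPartition (S : Finset α) (L : List (Finset α)) : Prop :=
  L.Pairwise Disjoint ∧ L.foldr (· ∪ ·) ∅ = S

theorem mem_foldr_union {L : List (Finset α)} {x : α} :
    x ∈ L.foldr (· ∪ ·) ∅ ↔ ∃ A ∈ L, x ∈ A := by
  induction L with
  | nil => simp
  | cons B T ih => simp [ih]

namespace IsBlockPartition

variable {S B : Finset α} {L L' R s t : List (Finset α)} {a : α}

theorem perm (h : IsBlockPartition S L) (hp : L.Perm L') : IsBlockPartition S L' :=
  ⟨h.1.perm hp fun hd => hd.symm, by ext x; simp [← h.2, mem_foldr_union, hp.mem_iff]⟩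

theorem subset (h : IsBlockPartition S L) (hB : B ∈ L) : B ⊆ S :=
  fun _ hx => h.2 ▸ mem_foldr_union.2 ⟨B, hB, hx⟩

theorem notMem_of_append_cons (h : IsBlockPartition S (s ++ B :: t)) (ha : a ∈ B) :
    ∀ A ∈ s ++ t, a ∉ A := fun A hA haA =>
  disjoint_left.1 ((List.pairwise_cons.1 (h.perm List.perm_middle).1).1 A hA) ha haA

theorem insert_cons (h : IsBlockPartition S (B :: R)) (ha : a ∉ S) :
    IsBlockPartition (insert a S) (insert a B :: R) := by
  obtain ⟨hBR, hR⟩ := List.pairwise_cons.1 h.1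
  refine ⟨List.pairwise_cons.2 ⟨fun A hA => disjoint_insert_left.2 ⟨?_, hBR A hA⟩, hR⟩, ?_⟩
  · exact fun haA => ha (h.subset (List.mem_cons_of_mem B hA) haA)
  · simp [← h.2, insert_union]

theorem singleton_cons (h : IsBlockPartition S R) (ha : a ∉ S) :
    IsBlockPartition (insert a S) ({a} :: R) := by
  refine ⟨List.pairwise_cons.2 ⟨fun A hA => disjoint_singleton_left.2 ?_, h.1⟩, ?_⟩
  · exact fun haA => ha (h.subset hA haA)
  · simp only [List.foldr_cons, h.2]
    exact (insert_eq a S).symm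

theorem erase_cons (h : IsBlockPartition S (B :: R)) (ha : a ∈ B) :
    IsBlockPartition (S.erase a) (B.erase a :: R) := by
  obtain ⟨hBR, hR⟩ := List.pairwise_cons.1 h.1
  refine ⟨List.pairwise_cons.2 ⟨fun A hA => (hBR A hA).mono_left (erase_subset a B), hR⟩, ?_⟩
  have haR : a ∉ R.foldr (· ∪ ·) ∅ := fun haR =>
    let ⟨A, hA, haA⟩ := mem_foldr_union.1 haR
    disjoint_left.1 (hBR A hA) ha haA
  simp [← h.2, erase_union_distrib, erase_eq_of_notMem haR]

theorem of_singleton_cons (h : IsBlockPartition S ({a} :: R)) :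
    IsBlockPartition (S.erase a) R := by
  have h' := h.erase_cons (mem_singleton_self a)
  refine ⟨(List.pairwise_cons.1 h'.1).2, ?_⟩
  simpa using h'.2

end IsBlockPartition

end Partition

/-- For nonempty blocks, `min B ≤ max A + 1`: then `max A` is no split toggle when `B`
follows `A`. -/
def Adjoins (A B : Finset ℕ) : Prop := ∃ y ∈ B, ∃ x ∈ A, y ≤ x + 1

theorem Adjoins.mono {A A' B B' : Finset ℕ} (h : Adjoins A B) (hA : A ⊆ A') (hB : B ⊆ B') :
    Adjoins A' B' :=
  let ⟨y, hy, x, hx, hyx⟩ := h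
  ⟨y, hB hy, x, hA hx, hyx⟩

theorem isChain_singleton_cons {m : ℕ} {L : List (Finset ℕ)} (hL : L.IsChain Adjoins)
    (hhead : ∀ B ∈ L.head?, ∃ y ∈ B, y ≤ m + 1) : ({m} :: L).IsChain Adjoins :=
  List.isChain_cons.2 ⟨fun B hB =>
    let ⟨y, hy, hym⟩ := hhead B hB
    ⟨y, hy, m, mem_singleton_self m, hym⟩, hL⟩

def IsInterval (A : Finset ℕ) : Prop := ∃ a b, a ≤ b ∧ A = Icc a b

theorem isInterval_Icc {a b : ℕ} (h : a ≤ b) : IsInterval (Icc a b) := ⟨a, b, h, rfl⟩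

theorem isInterval_singleton (a : ℕ) : IsInterval {a} := ⟨a, a, le_rfl, (Icc_self a).symm⟩

structure IsIntervalChain (n : ℕ) (L : List (Finset ℕ)) : Prop where
  isInterval : ∀ A ∈ L, IsInterval A
  isChain : L.IsChain Adjoins
  isBlockPartition : IsBlockPartition (Icc 1 n) L

theorem isInterval_iff {A : Finset ℕ} :
    IsInterval A ↔ A.Nonempty ∧ ∀ j ∈ A, (∃ x ∈ A, j < x) → j + 1 ∈ A := by
  constructor
  · rintro ⟨a, b, hab, rfl⟩
    refine ⟨nonempty_Icc.2 hab, fun j hj ⟨x, hx, hjx⟩ => ?_⟩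
    simp only [mem_Icc] at hj hx ⊢
    omega
  · rintro ⟨hne, hsucc⟩
    refine ⟨A.min' hne, A.max' hne, A.min'_le _ (A.max'_mem hne), ?_⟩
    have hIcc : ∀ x, A.min' hne ≤ x → x ≤ A.max' hne → x ∈ A := by
      intro x hx
      induction x, hx using Nat.le_induction with
      | base => exact fun _ => A.min'_mem hne
      | succ x _ ih =>
        exact fun hx => hsucc x (ih (by omega)) ⟨_, A.max'_mem hne, by omega⟩
    ext x
    exact ⟨fun hx => mem_Icc.2 ⟨A.min'_le x hx, A.le_max' x hx⟩,
      fun hx => hIcc x (mem_Icc.1 hx).1 (mem_Icc.1 hx).2⟩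

theorem forall_not_isFusedToggle_iff {L : List (Finset ℕ)} :
    (∀ j, ¬ IsFusedToggle L j) ↔ ∀ A ∈ L, ∀ j ∈ A, (∃ x ∈ A, j < x) → j + 1 ∈ A := by
  simp only [IsFusedToggle, List.mem_iff_getElem]
  constructor
  · rintro h A ⟨k, hk, rfl⟩ j hj hjx
    by_contra hj1
    exact h j ⟨k, hk, by rw [List.getD_eq_getElem _ _ hk]; exact ⟨hj, hjx, hj1⟩⟩
  · rintro h j ⟨k, hk, hjk⟩
    rw [List.getD_eq_getElem _ _ hk] at hjk
    exact hjk.2.2 (h _ ⟨k, hk, rfl⟩ j hjk.1 hjk.2.1)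

theorem forall_not_isSplitToggle_iff {L : List (Finset ℕ)} (hne : ∀ A ∈ L, A.Nonempty) :
    (∀ j, ¬ IsSplitToggle L j) ↔ L.IsChain Adjoins := by
  rw [List.isChain_iff_getElem]
  constructor
  · intro h k hk
    by_contra hadj
    have hA := hne _ (List.getElem_mem (Nat.lt_of_succ_lt hk))
    refine h (L[k].max' hA) ⟨k, hk, ?_⟩
    simp only [List.getD_eq_getElem _ _ hk, List.getD_eq_getElem _ _ (Nat.lt_of_succ_lt hk)]
    refine ⟨L[k].max'_mem hA, L[k].le_max', fun y hy => ?_⟩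
    by_contra hy'
    exact hadj ⟨y, hy, _, L[k].max'_mem hA, by omega⟩
  · rintro h j ⟨k, hk, hj, hmax, hnext⟩
    rw [List.getD_eq_getElem _ _ (Nat.lt_of_succ_lt hk)] at hj hmax
    rw [List.getD_eq_getElem _ _ hk] at hnext
    obtain ⟨y, hy, x, hx, hyx⟩ := h k hk
    have := hnext y hy
    have := hmax x hx
    omega

theorem isSetComposition_and_forall_not_isToggle_iff {n : ℕ} {L : List (Finset ℕ)} :
    (IsSetComposition n L ∧ ∀ j, ¬ IsToggle L j) ↔ IsIntervalChain n L := by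
  simp only [IsToggle, not_or, forall_and, forall_not_isFusedToggle_iff, IsSetComposition]
  constructor
  · rintro ⟨⟨hne, hpart⟩, hsplit, hfused⟩
    exact ⟨fun A hA => isInterval_iff.2 ⟨hne A hA, hfused A hA⟩,
      (forall_not_isSplitToggle_iff hne).1 hsplit, hpart⟩
  · rintro ⟨hI, hC, hpart⟩
    have hne A hA := (isInterval_iff.1 (hI A hA)).1
    exact ⟨⟨hne, hpart⟩, (forall_not_isSplitToggle_iff hne).2 hC,
      fun A hA => (isInterval_iff.1 (hI A hA)).2⟩

def growTop (n : ℕ) (L : List (Finset ℕ)) : List (Finset ℕ) :=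
  L.map fun A => if n ∈ A then insert (n + 1) A else A

def insertAfterTop (n : ℕ) : List (Finset ℕ) → List (Finset ℕ)
  | [] => []
  | A :: T => if n ∈ A then A :: {n + 1} :: T else A :: insertAfterTop n T

def extend (n : ℕ) : Fin 3 → List (Finset ℕ) → List (Finset ℕ)
  | 0 => growTop n
  | 1 => insertAfterTop n
  | 2 => List.cons {n + 1}

section Extend

variable {n : ℕ} {s t : List (Finset ℕ)} {C : Finset ℕ}

theorem growTop_append_cons (hst : ∀ A ∈ s ++ t, n ∉ A) (hC : n ∈ C) :
    growTop n (s ++ C :: t) = s ++ insert (n + 1) C :: t := by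
  rw [growTop, List.map_append, List.map_cons, if_pos hC,
    List.map_congr_left fun A hA => if_neg (hst A (List.mem_append_left t hA)),
    List.map_congr_left fun A hA => if_neg (hst A (List.mem_append_right s hA)),
    List.map_id', List.map_id']

theorem insertAfterTop_append_cons (hs : ∀ A ∈ s, n ∉ A) (hC : n ∈ C) :
    insertAfterTop n (s ++ C :: t) = s ++ C :: {n + 1} :: t := by
  induction s with
  | nil => simp [insertAfterTop, hC]
  | cons B s ih =>
    simp only [List.cons_append, insertAfterTop, if_neg (hs B List.mem_cons_self)]
    rw [ih fun A hA => hs A (List.mem_cons_of_mem B hA)]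

end Extend

def eraseTop (n : ℕ) (M : List (Finset ℕ)) : List (Finset ℕ) :=
  (M.map (·.erase (n + 1))).filter (·.Nonempty)

section EraseTop

variable {n : ℕ} {L : List (Finset ℕ)}

theorem eraseTop_growTop : eraseTop n (growTop n L) = eraseTop n L := by
  simp only [eraseTop, growTop, List.map_map]
  congr 2
  funext A
  by_cases hA : n ∈ A <;> simp [hA, erase_insert_eq_erase]

theorem eraseTop_insertAfterTop : eraseTop n (insertAfterTop n L) = eraseTop n L := by
  induction L with
  | nil => rfl
  | cons A T ih =>
    unfold insertAfterTop
    split_ifs <;> simp_all [eraseTop, List.filter_cons]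

theorem eraseTop_singleton_cons : eraseTop n ({n + 1} :: L) = eraseTop n L := by
  simp [eraseTop]

theorem eraseTop_extend (c : Fin 3) : eraseTop n (extend n c L) = eraseTop n L := by
  fin_cases c
  exacts [eraseTop_growTop, eraseTop_insertAfterTop, eraseTop_singleton_cons]

end EraseTop

theorem head?_insertAfterTop {n : ℕ} {L : List (Finset ℕ)} :
    (insertAfterTop n L).head? = L.head? := by
  cases L with
  | nil => rfl
  | cons A T => unfold insertAfterTop; split_ifs <;> rfl

namespace IsIntervalChain

variable {n : ℕ} {L s t : List (Finset ℕ)} {B C : Finset ℕ}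

theorem nonempty (hL : IsIntervalChain n L) (hB : B ∈ L) : B.Nonempty :=
  let ⟨_, _, hab, hB⟩ := hL.isInterval B hB
  hB ▸ nonempty_Icc.2 hab

theorem exists_mem_le (hL : IsIntervalChain n L) (hB : B ∈ L) : ∃ y ∈ B, y ≤ n :=
  let ⟨y, hy⟩ := hL.nonempty hB
  ⟨y, hy, (mem_Icc.1 (hL.isBlockPartition.subset hB hy)).2⟩

theorem exists_eq_append_Icc (hL : IsIntervalChain n L) (hn : 1 ≤ n) :
    ∃ s t a, 1 ≤ a ∧ a ≤ n ∧ L = s ++ Icc a n :: t ∧ ∀ A ∈ s ++ t, n ∉ A := by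
  obtain ⟨C, hC, hnC⟩ : ∃ C ∈ L, n ∈ C := mem_foldr_union.1 <| by
    rw [hL.isBlockPartition.2]
    exact mem_Icc.2 ⟨hn, le_rfl⟩
  obtain ⟨s, t, rfl⟩ := List.append_of_mem hC
  obtain ⟨a, b, hab, rfl⟩ := hL.isInterval _ hC
  have ha := hL.isBlockPartition.subset hC (mem_Icc.2 ⟨le_rfl, hab⟩)
  have hb := hL.isBlockPartition.subset hC (mem_Icc.2 ⟨hab, le_rfl⟩)
  simp only [mem_Icc] at ha hb hnC
  obtain rfl : b = n := by omega
  exact ⟨s, t, a, ha.1, hab, rfl, hL.isBlockPartition.notMem_of_append_cons (mem_Icc.2 hnC)⟩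

theorem growTop (hL : IsIntervalChain n L) (hn : 1 ≤ n) :
    IsIntervalChain (n + 1) (growTop n L) := by
  obtain ⟨s, t, a, -, han, rfl, hst⟩ := hL.exists_eq_append_Icc hn
  have hins : insert (n + 1) (Icc a n) = Icc a (n + 1) := insert_Icc_right_eq_Icc_add_one (by omega)
  rw [growTop_append_cons hst (mem_Icc.2 ⟨han, le_rfl⟩), hins]
  refine ⟨?_, ?_, ?_⟩
  · have hI := hL.isInterval
    simp only [List.forall_mem_append, List.forall_mem_cons] at hI ⊢
    exact ⟨hI.1, isInterval_Icc (by omega), hI.2.2⟩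
  · exact hL.isChain.replace_of_imp
      (fun _ _ h => h.mono subset_rfl (Icc_subset_Icc_right (by omega)))
      (fun _ _ h => h.mono (Icc_subset_Icc_right (by omega)) subset_rfl)
  · have := (hL.isBlockPartition.perm List.perm_middle).insert_cons (a := n + 1) (by simp)
    rw [hins, insert_Icc_right_eq_Icc_add_one (by omega)] at this
    exact this.perm List.perm_middle.symm

theorem insertAfterTop (hL : IsIntervalChain n L) (hn : 1 ≤ n) :
    IsIntervalChain (n + 1) (insertAfterTop n L) := by
  obtain ⟨s, t, a, -, han, rfl, hst⟩ := hL.exists_eq_append_Icc hn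
  rw [insertAfterTop_append_cons (fun A hA => hst A (List.mem_append_left t hA))
    (mem_Icc.2 ⟨han, le_rfl⟩)]
  refine ⟨?_, ?_, ?_⟩
  · have hI := hL.isInterval
    simp only [List.forall_mem_append, List.forall_mem_cons] at hI ⊢
    exact ⟨hI.1, hI.2.1, isInterval_singleton _, hI.2.2⟩
  · have hC := List.isChain_split.1 hL.isChain
    refine List.isChain_split.2 ⟨hC.1, List.isChain_cons_cons.2 ⟨?_, ?_⟩⟩
    · exact ⟨n + 1, mem_singleton_self _, n, mem_Icc.2 ⟨han, le_rfl⟩, le_rfl⟩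
    · refine isChain_singleton_cons (List.isChain_cons.1 hC.2).2 fun B hB => ?_
      obtain ⟨y, hy, hyn⟩ := hL.exists_mem_le (B := B) (by simp [List.mem_of_mem_head? hB])
      exact ⟨y, hy, by omega⟩
  · have := hL.isBlockPartition.singleton_cons (a := n + 1) (by simp)
    rw [insert_Icc_right_eq_Icc_add_one (by omega)] at this
    exact this.perm (by simpa using (List.perm_middle (l₁ := s ++ [Icc a n]) (l₂ := t)).symm)

theorem singleton_cons (hL : IsIntervalChain n L) :
    IsIntervalChain (n + 1) ({n + 1} :: L) := by
  refine ⟨List.forall_mem_cons.2 ⟨isInterval_singleton _, hL.isInterval⟩, ?_, ?_⟩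
  · refine isChain_singleton_cons hL.isChain fun B hB => ?_
    obtain ⟨y, hy, hyn⟩ := hL.exists_mem_le (List.mem_of_mem_head? hB)
    exact ⟨y, hy, by omega⟩
  · have := hL.isBlockPartition.singleton_cons (a := n + 1) (by simp)
    rwa [insert_Icc_right_eq_Icc_add_one (by omega)] at this

theorem eraseTop_eq (hL : IsIntervalChain n L) : eraseTop n L = L := by
  have hnot : ∀ A ∈ L, n + 1 ∉ A := fun A hA h => by
    simpa using hL.isBlockPartition.subset hA h
  rw [eraseTop, List.map_congr_left fun A hA => erase_eq_of_notMem (hnot A hA), List.map_id',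
    List.filter_eq_self]
  exact fun A hA => by simpa using hL.nonempty hA

variable {a : ℕ} {M : List (Finset ℕ)}

theorem of_append_Icc_succ (hM : IsIntervalChain (n + 1) (s ++ Icc a (n + 1) :: t)) (ha : a ≤ n) :
    IsIntervalChain n (s ++ Icc a n :: t) := by
  have hcut : (Icc a (n + 1)).erase (n + 1) = Icc a n := by
    rw [Icc_erase_right, Ico_add_one_right_eq_Icc]
  refine ⟨?_, ?_, ?_⟩
  · have hI := hM.isInterval
    simp only [List.forall_mem_append, List.forall_mem_cons] at hI ⊢
    exact ⟨hI.1, isInterval_Icc ha, hI.2.2⟩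
  · refine hM.isChain.replace_of_imp ?_ ?_
    · rintro A - ⟨y, hy, x, hx, hyx⟩
      exact ⟨min y n, by simp only [mem_Icc] at hy ⊢; omega, x, hx, by omega⟩
    · rintro D hD ⟨y, hy, x, hx, hyx⟩
      have hyD := hM.isBlockPartition.subset (B := D) (by simp [List.mem_of_mem_head? hD]) hy
      simp only [mem_Icc] at hx hyD
      exact ⟨y, hy, min x n, by simp only [mem_Icc]; omega, by omega⟩
  · have := (hM.isBlockPartition.perm List.perm_middle).erase_cons (a := n + 1)
      (mem_Icc.2 ⟨by omega, le_rfl⟩)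
    rw [hcut, Icc_erase_right, Ico_add_one_right_eq_Icc] at this
    exact this.perm List.perm_middle.symm

theorem of_singleton_cons (hM : IsIntervalChain (n + 1) ({n + 1} :: t)) : IsIntervalChain n t :=
  ⟨fun A hA => hM.isInterval A (List.mem_cons_of_mem _ hA), (List.isChain_cons.1 hM.isChain).2,
    by simpa [Icc_erase_right, Ico_add_one_right_eq_Icc] using
      hM.isBlockPartition.of_singleton_cons⟩

theorem of_append_cons_singleton (hM : IsIntervalChain (n + 1) (s ++ C :: {n + 1} :: t)) :
    n ∈ C ∧ IsIntervalChain n (s ++ C :: t) := by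
  have hp : (s ++ C :: {n + 1} :: t).Perm ({n + 1} :: (s ++ C :: t)) := by
    simpa using List.perm_middle (l₁ := s ++ [C]) (l₂ := t)
  have hpart := (hM.isBlockPartition.perm hp).of_singleton_cons
  rw [Icc_erase_right, Ico_add_one_right_eq_Icc] at hpart
  have hsub {A} (hA : A ∈ s ++ C :: t) : A ∈ s ++ C :: {n + 1} :: t := hp.symm.subset
    (List.mem_cons_of_mem _ hA)
  obtain ⟨hsC, ⟨y, hy, x, hx, hyx⟩, ht⟩ := List.isChain_append_cons_cons.1 hM.isChain
  obtain rfl := mem_singleton.1 hy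
  obtain rfl : x = n := by
    have := hpart.subset (List.mem_append_right s List.mem_cons_self) hx
    simp only [mem_Icc] at this
    omega
  refine ⟨hx, fun A hA => hM.isInterval A (hsub hA), List.isChain_split.2 ⟨hsC, ?_⟩, hpart⟩
  refine List.isChain_cons.2 ⟨fun D hD => ?_, (List.isChain_cons.1 ht).2⟩
  have hDt : D ∈ s ++ C :: t := by simp [List.mem_of_mem_head? hD]
  obtain ⟨z, hz⟩ := hM.nonempty (hsub hDt)
  exact ⟨z, hz, x, hx, by have := hpart.subset hDt hz; simp only [mem_Icc] at this; omega⟩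

theorem exists_extend_eq (hM : IsIntervalChain (n + 1) M) :
    ∃ c L, IsIntervalChain n L ∧ extend n c L = M := by
  obtain ⟨s, t, a, -, han, rfl, -⟩ := hM.exists_eq_append_Icc (Nat.le_add_left 1 n)
  rcases Nat.lt_or_ge n a with hna | han'
  · obtain rfl : a = n + 1 := by omega
    rw [Icc_self] at hM ⊢
    rcases List.eq_nil_or_concat s with rfl | ⟨s, C, rfl⟩
    · exact ⟨2, t, hM.of_singleton_cons, rfl⟩
    · rw [List.concat_eq_append, List.append_assoc, List.singleton_append] at hM ⊢
      obtain ⟨hnC, hL⟩ := hM.of_append_cons_singleton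
      exact ⟨1, s ++ C :: t, hL, insertAfterTop_append_cons (fun A hA =>
        hL.isBlockPartition.notMem_of_append_cons hnC A (List.mem_append_left t hA)) hnC⟩
  · have hL := hM.of_append_Icc_succ han'
    have hnC : n ∈ Icc a n := mem_Icc.2 ⟨han', le_rfl⟩
    refine ⟨0, _, hL, ?_⟩
    rw [extend, growTop_append_cons (hL.isBlockPartition.notMem_of_append_cons hnC) hnC,
      insert_Icc_right_eq_Icc_add_one (by omega)]

end IsIntervalChain

theorem IsIntervalChain.extend {n : ℕ} {L : List (Finset ℕ)} (hL : IsIntervalChain n L)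
    (hn : 1 ≤ n) (c : Fin 3) : IsIntervalChain (n + 1) (extend n c L) := by
  fin_cases c
  exacts [hL.growTop hn, hL.insertAfterTop hn, hL.singleton_cons]

section Injective

variable {n : ℕ} {L : List (Finset ℕ)}

theorem length_insertAfterTop (hL : IsIntervalChain n L) (hn : 1 ≤ n) :
    (insertAfterTop n L).length = L.length + 1 := by
  obtain ⟨s, t, a, -, han, rfl, hst⟩ := hL.exists_eq_append_Icc hn
  rw [insertAfterTop_append_cons (fun A hA => hst A (List.mem_append_left t hA))
    (mem_Icc.2 ⟨han, le_rfl⟩)]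
  simp only [List.length_append, List.length_cons]
  omega

theorem extend_left_injective (hL : IsIntervalChain n L) (hn : 1 ≤ n) :
    Function.Injective (extend n · L) := by
  have hlen0 : (extend n 0 L).length = L.length := List.length_map ..
  have hlen1 : (extend n 1 L).length = L.length + 1 := length_insertAfterTop hL hn
  have hlen2 : (extend n 2 L).length = L.length + 1 := rfl
  have hhead : (extend n 1 L).head? ≠ (extend n 2 L).head? := by
    rw [extend, head?_insertAfterTop]
    intro h
    simpa using hL.isBlockPartition.subset (List.mem_of_mem_head? h) (mem_singleton_self _)
  intro c c' h
  have hlen := congrArg List.length h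
  have hhd := congrArg List.head? h
  fin_cases c <;> fin_cases c' <;> simp_all

end Injective

theorem ncard_setOf_isIntervalChain_succ {n : ℕ} (hn : 1 ≤ n) :
    {M | IsIntervalChain (n + 1) M}.ncard = 3 * {L | IsIntervalChain n L}.ncard := by
  let e : Fin 3 × {L | IsIntervalChain n L} → {M | IsIntervalChain (n + 1) M} :=
    fun p => ⟨extend n p.1 p.2, p.2.2.extend hn p.1⟩
  have he : Function.Bijective e := by
    refine ⟨?_, ?_⟩
    · rintro ⟨c, L, hL⟩ ⟨c', L', hL'⟩ h
      have hM : extend n c L = extend n c' L' := congrArg Subtype.val h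
      obtain rfl : L = L' := by
        rw [← hL.eraseTop_eq, ← hL'.eraseTop_eq, ← eraseTop_extend c, hM, eraseTop_extend]
      obtain rfl : c = c' := extend_left_injective hL hn hM
      rfl
    · rintro ⟨M, hM⟩
      obtain ⟨c, L, hL, rfl⟩ := IsIntervalChain.exists_extend_eq hM
      exact ⟨(c, ⟨L, hL⟩), rfl⟩
  rw [← Nat.card_coe_set_eq, ← Nat.card_eq_of_bijective e he, Nat.card_prod, Nat.card_fin,
    Nat.card_coe_set_eq]

theorem setOf_isIntervalChain_one : {L | IsIntervalChain 1 L} = {[{1}]} := by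
  ext L
  simp only [Set.mem_ofPred_eq, Set.mem_singleton_iff]
  constructor
  · intro hL
    obtain ⟨s, t, a, ha, ha', rfl, hst⟩ := hL.exists_eq_append_Icc le_rfl
    obtain rfl : a = 1 := by omega
    have hnil : ∀ A ∈ s ++ t, False := fun A hA => by
      have hA' : A ∈ s ++ Icc 1 1 :: t :=
        List.mem_append.2 ((List.mem_append.1 hA).imp id (List.mem_cons_of_mem _))
      obtain ⟨y, hy⟩ := hL.nonempty hA'
      obtain rfl : y = 1 := by simpa using hL.isBlockPartition.subset hA' hy
      exact hst A hA hy
    obtain rfl : s = [] := List.eq_nil_iff_forall_not_mem.2 fun A hA =>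
      hnil A (List.mem_append_left t hA)
    obtain rfl : t = [] := List.eq_nil_iff_forall_not_mem.2 fun A hA =>
      hnil A (List.mem_append_right [] hA)
    simp
  · rintro rfl
    exact ⟨by simp [isInterval_singleton], by simp, by simp [IsBlockPartition]⟩

end PaperSetComp

open PaperSetComp in
/-- **Lemma (a) of Section 5.2:** the number of set compositions of `{1, …, n}` with no
toggle point is `3^{n-1}`. -/
theorem card_toggle_free_set_compositions (n : ℕ) (hn : 1 ≤ n) :
    Set.ncard {L : List (Finset ℕ) | IsSetComposition n L ∧ ∀ j : ℕ, ¬ IsToggle L j}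
      = 3 ^ (n - 1) := by
  simp_rw [isSetComposition_and_forall_not_isToggle_iff]
  induction n, hn using Nat.le_induction with
  | base => simp [setOf_isIntervalChain_one]
  | succ n hn ih =>
    rw [ncard_setOf_isIntervalChain_succ hn, ih, ← pow_succ', Nat.sub_add_cancel hn,
      Nat.add_sub_cancel]
end

section
/- Assume a(ι) = b(ι) = 1 and let τ ∈ V satisfy a(τ) = b(τ) = 0. Then for every n ≥ 1 the pure tensor τ^{⊗(n−1)} ∈ H_n is primitive: Δ(τ^{⊗(n−1)}) = τ^{⊗(n−1)}⊗1 + 1⊗τ^{⊗(n−1)} (for n = 1 this reads Δ(1₁) = 1₁⊗1 + 1⊗1₁). -/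
open scoped TensorProduct

noncomputable section

/-!
On a pure tensor `ψ`, the scalar `c` of `T_φ(S; ψ)` picks up a factor `φ(ψ_s)` for every
`s ∈ S` that is either followed by a gap or is the last element of `S` with `s < n`.
Hence, if `φ` kills every entry of `ψ`, `T_φ(S; ψ) = 0` unless `n ∈ S`. In
`Δ(ψ) = ∑_A T_a(A; ψ) ⊗ T_b(Aᶜ; ψ)` the index `n` lies in exactly one of `A`, `Aᶜ`, so only
the terms with `A = ∅` or `Aᶜ = ∅` survive, and `T_φ({1, …, n}; ψ) = ψ`.
-/

namespace PaperCHA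

theorem sort_Icc (N : ℕ) : (Finset.Icc 1 N).sort (· ≤ ·) = List.range' 1 N := by
  have h : (List.range' 1 N).toFinset = Finset.Icc 1 N := by
    ext m
    simp only [List.mem_toFinset, List.mem_range'_1, Finset.mem_Icc]
    omega
  rw [← h]
  exact (List.toFinset_sort _ List.nodup_range').2 List.pairwise_le_range'

theorem map_psiOf_range' {V : Type} [AddCommGroup V] (l : List V) :
    (List.range' 1 l.length).map (psiOf l) = l := by
  refine List.ext_getElem (by simp) fun i _ h => ?_
  simp [psiOf, h]

variable {V : Type} [AddCommGroup V] [Module ℂ V] (iv : V) (φ : V →ₗ[ℂ] ℂ) (ψ : ℕ → V)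

theorem Tlist_fst_eq_zero_of_notMem {n : ℕ} (hφ : ∀ j, φ (ψ j) = 0) :
    ∀ {L : List ℕ}, L ≠ [] → n ∉ L → (Tlist iv φ ψ n L).1 = 0
  | [s], _, hn => by
    have hs : s ≠ n := fun h => hn (by simp [h])
    simp [Tlist, hs, hφ]
  | s :: t :: rest, _, hn => by
    rw [Tlist]
    split_ifs
    · exact Tlist_fst_eq_zero_of_notMem hφ (List.cons_ne_nil t rest)
        (fun h => hn (List.mem_cons_of_mem s h))
    · simp [hφ]

theorem Tfun_eq_zero_of_notMem {n : ℕ} (hφ : ∀ j, φ (ψ j) = 0) {S : Finset ℕ}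
    (hS : S ≠ ∅) (hn : n ∉ S) : Tfun iv φ ψ n S = 0 := by
  have hsort : S.sort (· ≤ ·) ≠ [] := by
    rwa [Ne, ← List.length_eq_zero_iff, Finset.length_sort, Finset.card_eq_zero]
  rw [Tfun, if_neg hS, Tlist_fst_eq_zero_of_notMem iv φ ψ hφ hsort
    (fun h => hn ((Finset.mem_sort _).mp h)), zero_smul]

theorem Tlist_range' : ∀ (k s : ℕ),
    Tlist iv φ ψ (s + k) (List.range' s (k + 1)) = (1, (List.range' s k).map ψ)
  | 0, s => by simp [Tlist]
  | k + 1, s => by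
    rw [List.range'_succ, List.range'_succ, Tlist, if_pos rfl, ← List.range'_succ,
      show s + (k + 1) = s + 1 + k by omega, Tlist_range' k (s + 1), List.range'_succ]
    rfl

variable {iv φ ψ}

theorem apply_psiOf_eq_zero {l : List V} (hl : ∀ x ∈ l, φ x = 0) (j : ℕ) :
    φ (psiOf l j) = 0 := by
  rw [psiOf, List.getD_eq_getElem?_getD]
  cases h : l[j - 1]? with
  | none => simp
  | some x => exact hl x (List.mem_of_getElem? h)

variable (iv φ)

theorem Tfun_Icc_psiOf (l : List V) :
    Tfun iv φ (psiOf l) (l.length + 1) (Finset.Icc 1 (l.length + 1)) = pt iv l := by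
  have hrun := Tlist_range' iv φ (psiOf l) l.length 1
  rw [Nat.add_comm 1] at hrun
  rw [Tfun, if_neg (by simp), sort_Icc, hrun, map_psiOf_range', one_smul]

theorem DeltaSpec.apply_pt_of_forall_mem {a b : V →ₗ[ℂ] ℂ}
    {Δ : HAlg V iv →ₗ[ℂ] HAlg V iv ⊗[ℂ] HAlg V iv} (hΔ : DeltaSpec iv a b Δ) {l : List V}
    (hla : ∀ x ∈ l, a x = 0) (hlb : ∀ x ∈ l, b x = 0) :
    Δ (pt iv l) = pt iv l ⊗ₜ[ℂ] (1 : HAlg V iv) + (1 : HAlg V iv) ⊗ₜ[ℂ] pt iv l := by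
  set N := l.length + 1
  have hIcc : Finset.Icc 1 N ≠ ∅ := by simp [N]
  have hsub : {∅, Finset.Icc 1 N} ⊆ (Finset.Icc 1 N).powerset := by
    simp [Finset.insert_subset_iff]
  have hmixed : ∀ A ∈ (Finset.Icc 1 N).powerset, A ∉ ({∅, Finset.Icc 1 N} : Finset _) →
      Tfun iv a (psiOf l) N A ⊗ₜ[ℂ] Tfun iv b (psiOf l) N (Finset.Icc 1 N \ A) = 0 := by
    intro A hA hA'
    simp only [Finset.mem_insert, Finset.mem_singleton, not_or] at hA'
    have hAc : Finset.Icc 1 N \ A ≠ ∅ := fun h =>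
      hA'.2 ((Finset.mem_powerset.mp hA).antisymm (Finset.sdiff_eq_empty_iff_subset.mp h))
    by_cases hN : N ∈ A
    · rw [Tfun_eq_zero_of_notMem iv b _ (apply_psiOf_eq_zero hlb) hAc
        (fun h => (Finset.mem_sdiff.mp h).2 hN), TensorProduct.tmul_zero]
    · rw [Tfun_eq_zero_of_notMem iv a _ (apply_psiOf_eq_zero hla) hA'.1 hN,
        TensorProduct.zero_tmul]
  rw [hΔ.2 l, ← Finset.sum_subset hsub hmixed, Finset.sum_pair hIcc.symm, Finset.sdiff_empty,
    Finset.sdiff_self, Tfun_Icc_psiOf, Tfun_Icc_psiOf]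
  simp only [Tfun, if_true, add_comm]

end PaperCHA

open PaperCHA in
theorem power_of_tau_is_primitive_general
    {V : Type} [AddCommGroup V] [Module ℂ V] (iv : V) (a b : V →ₗ[ℂ] ℂ)
    (Δ : HAlg V iv →ₗ[ℂ] HAlg V iv ⊗[ℂ] HAlg V iv) (hΔ : DeltaSpec iv a b Δ)
    (τ : V) (hτa : a τ = 0) (hτb : b τ = 0) :
    ∀ n : ℕ, 1 ≤ n →
      Δ (pt iv (List.replicate (n - 1) τ))
        = pt iv (List.replicate (n - 1) τ) ⊗ₜ[ℂ] (1 : HAlg V iv)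
          + (1 : HAlg V iv) ⊗ₜ[ℂ] pt iv (List.replicate (n - 1) τ) := fun _ _ =>
  hΔ.apply_pt_of_forall_mem iv (fun _ hx => List.eq_of_mem_replicate hx ▸ hτa)
    (fun _ hx => List.eq_of_mem_replicate hx ▸ hτb)

open PaperCHA in
/-- **Primitivity (Lemma 4.4, first case):** if `a(ι) = b(ι) = 1` and `τ ∈ V` satisfies
`a(τ) = b(τ) = 0`, then each pure tensor `τ^{⊗(n-1)} ∈ H_n` (`n ≥ 1`) is primitive. -/
theorem power_of_tau_is_primitive
    {V : Type} [AddCommGroup V] [Module ℂ V] (iv : V) (a b : V →ₗ[ℂ] ℂ)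
    (ha : a iv = 1) (hb : b iv = 1)
    (Δ : HAlg V iv →ₗ[ℂ] HAlg V iv ⊗[ℂ] HAlg V iv) (hΔ : DeltaSpec iv a b Δ)
    (τ : V) (hτa : a τ = 0) (hτb : b τ = 0) :
    ∀ n : ℕ, 1 ≤ n →
      Δ (pt iv (List.replicate (n - 1) τ))
        = pt iv (List.replicate (n - 1) τ) ⊗ₜ[ℂ] (1 : HAlg V iv)
          + (1 : HAlg V iv) ⊗ₜ[ℂ] pt iv (List.replicate (n - 1) τ) :=
  power_of_tau_is_primitive_general iv a b Δ hΔ τ hτa hτb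
end
end

section
/- Fix n ≥ 1. Let T be the set of set compositions of {1,…,n} having at least one toggle point; for each element of T let j* denote its minimal toggle point, and write Splt (respectively Fusd) for the subset of T consisting of compositions whose minimal toggle point is a split (respectively fused) toggle. Then the map Φ that sends a composition (A_1,…,A_ℓ) ∈ Splt with minimal toggle point j* = max A_i to the composition (A_1,…,A_{i−1}, A_i ∪ A_{i+1}, A_{i+2},…,A_ℓ) is a well-defined bijection from Splt onto Fusd, and it decreases the number of blocks by exactly one: ℓ(Φ(A)) = ℓ(A) − 1. -/
namespace PaperSetComp

/-- `j` is the minimal toggle point of `L`. -/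
def IsMinToggle (L : List (Finset ℕ)) (j : ℕ) : Prop :=
  IsToggle L j ∧ ∀ j' : ℕ, IsToggle L j' → j ≤ j'

/-- Set compositions of `{1, …, n}` whose minimal toggle point is a split toggle. -/
def Splt (n : ℕ) : Set (List (Finset ℕ)) :=
  {L | IsSetComposition n L ∧ ∃ j : ℕ, IsMinToggle L j ∧ IsSplitToggle L j}

/-- Set compositions of `{1, …, n}` whose minimal toggle point is a fused toggle. -/
def Fusd (n : ℕ) : Set (List (Finset ℕ)) :=
  {L | IsSetComposition n L ∧ ∃ j : ℕ, IsMinToggle L j ∧ IsFusedToggle L j}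

/-- Merge the `k`-th and `(k+1)`-st blocks of `L`. -/
def mergeAt (L : List (Finset ℕ)) (k : ℕ) : List (Finset ℕ) :=
  L.take k ++ (L.getD k ∅ ∪ L.getD (k + 1) ∅) :: L.drop (k + 2)

end PaperSetComp

namespace PaperSetComp

variable {n k i j j' x : ℕ} {L M l₁ l₂ : List (Finset ℕ)} {A B : Finset ℕ}

lemma take_append_getD_cons_drop (hk : k < L.length) :
    L.take k ++ L.getD k ∅ :: L.drop (k + 1) = L := by
  rw [List.getD_eq_getElem _ _ hk, ← List.drop_eq_getElem_cons hk, List.take_append_drop]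

lemma take_append_getD_cons_getD_cons_drop (hk : k + 1 < L.length) :
    L.take k ++ L.getD k ∅ :: L.getD (k + 1) ∅ :: L.drop (k + 2) = L := by
  rw [List.getD_eq_getElem _ _ hk, ← List.drop_eq_getElem_cons hk,
    take_append_getD_cons_drop (by omega)]

lemma getD_mem (hk : k < L.length) : L.getD k ∅ ∈ L := by
  rw [List.getD_eq_getElem _ _ hk]
  exact List.getElem_mem hk

lemma disjoint_getD (hpw : L.Pairwise Disjoint) (hik : i ≠ k) :
    Disjoint (L.getD i ∅) (L.getD k ∅) := by
  wlog hlt : i < k generalizing i k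
  · exact (this hik.symm (by omega)).symm
  by_cases hk : k < L.length
  · rw [List.getD_eq_getElem _ _ hk, List.getD_eq_getElem _ _ (by omega)]
    exact List.pairwise_iff_getElem.1 hpw i k (by omega) hk hlt
  · rw [List.getD_eq_default _ _ (not_lt.1 hk)]
    exact Finset.disjoint_empty_right _

lemma eq_of_mem_getD_of_mem_getD (hpw : L.Pairwise Disjoint) (hi : x ∈ L.getD i ∅)
    (hk : x ∈ L.getD k ∅) : i = k := by
  by_contra hik
  exact Finset.disjoint_left.1 (disjoint_getD hpw hik) hi hk

lemma isSetComposition_append_cons_cons_iff (hA : A.Nonempty) (hB : B.Nonempty)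
    (hAB : Disjoint A B) :
    IsSetComposition n (l₁ ++ A :: B :: l₂) ↔ IsSetComposition n (l₁ ++ (A ∪ B) :: l₂) := by
  have hne : (∀ X ∈ l₁ ++ A :: B :: l₂, X.Nonempty) ↔ ∀ X ∈ l₁ ++ (A ∪ B) :: l₂, X.Nonempty := by
    simp [or_imp, forall_and, hA, hB, hA.mono Finset.subset_union_left]
  have hpw : (l₁ ++ A :: B :: l₂).Pairwise Disjoint ↔ (l₁ ++ (A ∪ B) :: l₂).Pairwise Disjoint := by
    simp only [List.pairwise_append, List.pairwise_cons, List.mem_cons, or_imp, forall_and,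
      forall_eq, hAB, true_and, Finset.disjoint_union_left, Finset.disjoint_union_right,
      and_congr_right_iff]
    tauto
  have hun : (l₁ ++ A :: B :: l₂).foldr (· ∪ ·) ∅ = (l₁ ++ (A ∪ B) :: l₂).foldr (· ∪ ·) ∅ := by
    simp [Finset.union_assoc]
  rw [IsSetComposition, IsSetComposition, hne, hpw, hun]

lemma mergeAt_append_cons_cons (hk : l₁.length = k) :
    mergeAt (l₁ ++ A :: B :: l₂) k = l₁ ++ (A ∪ B) :: l₂ := by
  subst hk
  simp [mergeAt]

lemma mergeAt_length (hk : k + 1 < L.length) : (mergeAt L k).length = L.length - 1 := by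
  grind [mergeAt]

lemma getD_mergeAt_of_lt (hi : i < k) : (mergeAt L k).getD i ∅ = L.getD i ∅ := by
  grind [mergeAt]

lemma getD_mergeAt_self (hk : k + 1 < L.length) :
    (mergeAt L k).getD k ∅ = L.getD k ∅ ∪ L.getD (k + 1) ∅ := by
  grind [mergeAt]

lemma getD_mergeAt_of_gt (hk : k + 1 < L.length) (hi : k < i) :
    (mergeAt L k).getD i ∅ = L.getD (i + 1) ∅ := by
  grind [mergeAt]

lemma IsSetComposition.mergeAt (hc : IsSetComposition n L) (hk : k + 1 < L.length) :
    IsSetComposition n (mergeAt L k) := by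
  have hA := hc.1 _ (getD_mem (k := k) (by omega))
  have hB := hc.1 _ (getD_mem hk)
  have hAB := disjoint_getD (i := k) (k := k + 1) hc.2.1 (by omega)
  rw [← take_append_getD_cons_getD_cons_drop hk] at hc
  exact (isSetComposition_append_cons_cons_iff hA hB hAB).1 hc

def splitAt (M : List (Finset ℕ)) (k j : ℕ) : List (Finset ℕ) :=
  M.take k ++ (M.getD k ∅).filter (· ≤ j) :: (M.getD k ∅).filter (j < ·) :: M.drop (k + 1)

lemma splitAt_append_cons (hk : l₁.length = k) :
    splitAt (l₁ ++ A :: l₂) k j = l₁ ++ A.filter (· ≤ j) :: A.filter (j < ·) :: l₂ := by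
  subst hk
  simp [splitAt]

lemma filter_le_union_filter_lt (A : Finset ℕ) (j : ℕ) :
    A.filter (· ≤ j) ∪ A.filter (j < ·) = A := by
  rw [← Finset.filter_or]
  exact Finset.filter_true_of_mem fun x _ => le_or_gt x j

lemma mergeAt_splitAt (hk : k < M.length) : mergeAt (splitAt M k j) k = M := by
  rw [splitAt, mergeAt_append_cons_cons (by simp; omega), filter_le_union_filter_lt,
    take_append_getD_cons_drop hk]

lemma splitAt_mergeAt (hk : k + 1 < L.length) (hle : ∀ x ∈ L.getD k ∅, x ≤ j)
    (hlt : ∀ y ∈ L.getD (k + 1) ∅, j < y) : splitAt (mergeAt L k) k j = L := by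
  rw [mergeAt, splitAt_append_cons (by simp; omega), Finset.filter_union, Finset.filter_union,
    Finset.filter_true_of_mem hle, Finset.filter_false_of_mem fun y hy => not_le.2 (hlt y hy),
    Finset.filter_false_of_mem fun x hx => not_lt.2 (hle x hx), Finset.filter_true_of_mem hlt,
    Finset.union_empty, Finset.empty_union, take_append_getD_cons_getD_cons_drop hk]

lemma IsSetComposition.splitAt (hc : IsSetComposition n M) (hk : k < M.length)
    (hle : ∃ x ∈ M.getD k ∅, x ≤ j) (hlt : ∃ x ∈ M.getD k ∅, j < x) :
    IsSetComposition n (splitAt M k j) := by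
  obtain ⟨x, hx, hxj⟩ := hle
  obtain ⟨y, hy, hjy⟩ := hlt
  have hdisj : Disjoint ((M.getD k ∅).filter (· ≤ j)) ((M.getD k ∅).filter (j < ·)) :=
    Finset.disjoint_filter.2 fun _ _ h => not_lt.2 h
  rw [← take_append_getD_cons_drop hk, ← filter_le_union_filter_lt (M.getD k ∅) j] at hc
  exact (isSetComposition_append_cons_cons_iff ⟨x, Finset.mem_filter.2 ⟨hx, hxj⟩⟩
    ⟨y, Finset.mem_filter.2 ⟨hy, hjy⟩⟩ hdisj).2 hc

lemma splitAt_length (hk : k < M.length) : (splitAt M k j).length = M.length + 1 := by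
  grind [splitAt]

lemma getD_splitAt_self (hk : k < M.length) :
    (splitAt M k j).getD k ∅ = (M.getD k ∅).filter (· ≤ j) := by
  grind [splitAt]

lemma getD_splitAt_succ (hk : k < M.length) :
    (splitAt M k j).getD (k + 1) ∅ = (M.getD k ∅).filter (j < ·) := by
  grind [splitAt]

-- The bodies of `IsSplitToggle` and `IsFusedToggle`, with the block `k` containing `j` named.
def IsSplitToggleAt (L : List (Finset ℕ)) (j k : ℕ) : Prop :=
  k + 1 < L.length ∧ j ∈ L.getD k ∅ ∧ (∀ x ∈ L.getD k ∅, x ≤ j) ∧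
    ∀ y ∈ L.getD (k + 1) ∅, j + 1 < y

def IsFusedToggleAt (L : List (Finset ℕ)) (j k : ℕ) : Prop :=
  k < L.length ∧ j ∈ L.getD k ∅ ∧ (∃ x ∈ L.getD k ∅, j < x) ∧ j + 1 ∉ L.getD k ∅

lemma IsSplitToggleAt.isSplitToggle_of_mergeAt (h : IsSplitToggleAt L j k) (hj' : j' < j)
    (h' : IsSplitToggle (mergeAt L k) j') : IsSplitToggle L j' := by
  obtain ⟨hk, hj, hmax, -⟩ := h
  obtain ⟨i, hi, hj'i, hmax', hnext'⟩ := h'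
  rw [mergeAt_length hk] at hi
  rcases lt_trichotomy i k with hik | rfl | hik
  · rw [getD_mergeAt_of_lt hik] at hj'i hmax'
    refine ⟨i, by omega, hj'i, hmax', fun y hy => hnext' y ?_⟩
    rcases Nat.lt_or_ge (i + 1) k with hik' | hik'
    · rwa [getD_mergeAt_of_lt hik']
    · rw [show i + 1 = k by omega] at hy ⊢
      rw [getD_mergeAt_self hk]
      exact Finset.mem_union_left _ hy
  · rw [getD_mergeAt_self hk] at hmax'
    exact absurd (hmax' j (Finset.mem_union_left _ hj)) (by omega)
  · rw [getD_mergeAt_of_gt hk hik] at hj'i hmax'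
    rw [getD_mergeAt_of_gt hk (by omega)] at hnext'
    exact ⟨i + 1, by omega, hj'i, hmax', hnext'⟩

lemma IsSplitToggleAt.isFusedToggle_of_mergeAt (h : IsSplitToggleAt L j k) (hj' : j' < j)
    (h' : IsFusedToggle (mergeAt L k) j') : IsFusedToggle L j' := by
  obtain ⟨hk, hj, -, hnext⟩ := h
  obtain ⟨i, hi, hj'i, hbig, hsucc⟩ := h'
  rw [mergeAt_length hk] at hi
  rcases lt_trichotomy i k with hik | rfl | hik
  · rw [getD_mergeAt_of_lt hik] at hj'i hbig hsucc
    exact ⟨i, by omega, hj'i, hbig, hsucc⟩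
  · rw [getD_mergeAt_self hk] at hj'i hsucc
    have hj'i : j' ∈ L.getD i ∅ :=
      (Finset.mem_union.1 hj'i).resolve_right fun hy => by have := hnext _ hy; omega
    exact ⟨i, by omega, hj'i, ⟨j, hj, hj'⟩, fun h => hsucc (Finset.mem_union_left _ h)⟩
  · rw [getD_mergeAt_of_gt hk hik] at hj'i hbig hsucc
    exact ⟨i + 1, by omega, hj'i, hbig, hsucc⟩

lemma IsSplitToggleAt.isSplitToggle_mergeAt (h : IsSplitToggleAt L j k) (hj' : j' < j)
    (h' : IsSplitToggle L j') : IsSplitToggle (mergeAt L k) j' := by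
  obtain ⟨hk, hj, -, hnext⟩ := h
  obtain ⟨i, hi, hj'i, hmax', hnext'⟩ := h'
  have hlen := mergeAt_length hk
  rcases lt_trichotomy i k with hik | rfl | hik
  · refine ⟨i, by omega, by rwa [getD_mergeAt_of_lt hik], by rwa [getD_mergeAt_of_lt hik], ?_⟩
    rcases Nat.lt_or_ge (i + 1) k with hik' | hik'
    · rwa [getD_mergeAt_of_lt hik']
    · rw [show i + 1 = k by omega] at hnext' ⊢
      rw [getD_mergeAt_self hk]
      intro y hy
      rcases Finset.mem_union.1 hy with hy | hy
      · exact hnext' y hy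
      · have := hnext y hy
        omega
  · exact absurd (hmax' j hj) (by omega)
  · obtain ⟨i, rfl⟩ : ∃ i', i = i' + 1 := ⟨i - 1, by omega⟩
    rcases (Nat.le_of_lt_succ hik).eq_or_lt with rfl | hik
    · have := hnext j' hj'i
      omega
    · rw [← getD_mergeAt_of_gt hk hik] at hj'i hmax'
      rw [← getD_mergeAt_of_gt hk (by omega)] at hnext'
      exact ⟨i, by omega, hj'i, hmax', hnext'⟩

lemma IsSplitToggleAt.isFusedToggle_mergeAt (h : IsSplitToggleAt L j k) (hj' : j' < j)
    (h' : IsFusedToggle L j') : IsFusedToggle (mergeAt L k) j' := by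
  obtain ⟨hk, -, hmax, hnext⟩ := h
  obtain ⟨i, hi, hj'i, ⟨x, hx, hj'x⟩, hsucc⟩ := h'
  have hlen := mergeAt_length hk
  rcases lt_trichotomy i k with hik | rfl | hik
  · rw [← getD_mergeAt_of_lt hik] at hj'i hx hsucc
    exact ⟨i, by omega, hj'i, ⟨x, hx, hj'x⟩, hsucc⟩
  · have hsucc' : j' + 1 ∉ L.getD i ∅ ∪ L.getD (i + 1) ∅ := by
      rw [Finset.mem_union, not_or]
      exact ⟨hsucc, fun hy => by have := hnext _ hy; omega⟩
    rw [← getD_mergeAt_self hk] at hsucc'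
    refine ⟨i, by omega, ?_, ⟨x, ?_, hj'x⟩, hsucc'⟩ <;>
      rw [getD_mergeAt_self hk] <;> exact Finset.mem_union_left _ ‹_›
  · obtain ⟨i, rfl⟩ : ∃ i', i = i' + 1 := ⟨i - 1, by omega⟩
    rcases (Nat.le_of_lt_succ hik).eq_or_lt with rfl | hik
    · have := hnext j' hj'i
      omega
    · rw [← getD_mergeAt_of_gt hk hik] at hj'i hx hsucc
      exact ⟨i, by omega, hj'i, ⟨x, hx, hj'x⟩, hsucc⟩

lemma IsSplitToggleAt.isToggle_mergeAt_iff (h : IsSplitToggleAt L j k) (hj' : j' < j) :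
    IsToggle (mergeAt L k) j' ↔ IsToggle L j' :=
  ⟨Or.imp (h.isSplitToggle_of_mergeAt hj') (h.isFusedToggle_of_mergeAt hj'),
    Or.imp (h.isSplitToggle_mergeAt hj') (h.isFusedToggle_mergeAt hj')⟩

lemma IsSplitToggleAt.isFusedToggleAt_mergeAt (h : IsSplitToggleAt L j k)
    (hne : (L.getD (k + 1) ∅).Nonempty) : IsFusedToggleAt (mergeAt L k) j k := by
  obtain ⟨hk, hj, hmax, hnext⟩ := h
  obtain ⟨y, hy⟩ := hne
  rw [IsFusedToggleAt, mergeAt_length hk, getD_mergeAt_self hk]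
  refine ⟨by omega, Finset.mem_union_left _ hj, ⟨y, Finset.mem_union_right _ hy, ?_⟩, ?_⟩
  · have := hnext y hy
    omega
  · rw [Finset.mem_union, not_or]
    exact ⟨fun h => by have := hmax _ h; omega, fun h => by have := hnext _ h; omega⟩

lemma IsFusedToggleAt.isSplitToggleAt_splitAt (h : IsFusedToggleAt M j k) :
    IsSplitToggleAt (splitAt M k j) j k := by
  obtain ⟨hk, hj, -, hsucc⟩ := h
  rw [IsSplitToggleAt, splitAt_length hk, getD_splitAt_self hk, getD_splitAt_succ hk]
  refine ⟨by omega, Finset.mem_filter.2 ⟨hj, le_rfl⟩, fun x hx => (Finset.mem_filter.1 hx).2, ?_⟩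
  intro y hy
  obtain ⟨hy, hjy⟩ := Finset.mem_filter.1 hy
  have : y ≠ j + 1 := by rintro rfl; exact hsucc hy
  omega

lemma IsMinToggle.mergeAt (hmin : IsMinToggle L j) (h : IsSplitToggleAt L j k)
    (hne : (L.getD (k + 1) ∅).Nonempty) : IsMinToggle (mergeAt L k) j :=
  ⟨Or.inr ⟨k, h.isFusedToggleAt_mergeAt hne⟩, fun _ hj' =>
    le_of_not_gt fun hlt => (hmin.2 _ ((h.isToggle_mergeAt_iff hlt).1 hj')).not_gt hlt⟩

lemma IsMinToggle.splitAt (hmin : IsMinToggle M j) (h : IsFusedToggleAt M j k) :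
    IsMinToggle (splitAt M k j) j := by
  have hs := h.isSplitToggleAt_splitAt
  refine ⟨Or.inl ⟨k, hs⟩, fun _ hj' => le_of_not_gt fun hlt => ?_⟩
  have := (hs.isToggle_mergeAt_iff hlt).2 hj'
  rw [mergeAt_splitAt h.1] at this
  exact (hmin.2 _ this).not_gt hlt

lemma IsMinToggle.unique (h : IsMinToggle L j) (h' : IsMinToggle L j') : j = j' :=
  le_antisymm (h.2 _ h'.1) (h'.2 _ h.1)

-- The minimal toggle and the index of its block; an arbitrary pair when there is no toggle.
noncomputable def minToggleLoc (L : List (Finset ℕ)) : ℕ × ℕ :=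
  Classical.epsilon fun p => IsMinToggle L p.1 ∧ p.1 ∈ L.getD p.2 ∅

lemma minToggleLoc_eq (hpw : L.Pairwise Disjoint) (hmin : IsMinToggle L j)
    (hjk : j ∈ L.getD k ∅) : minToggleLoc L = (j, k) := by
  obtain ⟨hmin', hmem⟩ := Classical.epsilon_spec
    (p := fun p : ℕ × ℕ => IsMinToggle L p.1 ∧ p.1 ∈ L.getD p.2 ∅) ⟨(j, k), hmin, hjk⟩
  have hj := hmin'.unique hmin
  rw [hj] at hmem
  exact Prod.ext hj (eq_of_mem_getD_of_mem_getD hpw hmem hjk)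

noncomputable def mergeMinToggle (L : List (Finset ℕ)) : List (Finset ℕ) :=
  mergeAt L (minToggleLoc L).2

noncomputable def splitMinToggle (M : List (Finset ℕ)) : List (Finset ℕ) :=
  splitAt M (minToggleLoc M).2 (minToggleLoc M).1

lemma mergeMinToggle_eq (hpw : L.Pairwise Disjoint) (hmin : IsMinToggle L j)
    (hjk : j ∈ L.getD k ∅) : mergeMinToggle L = mergeAt L k := by
  rw [mergeMinToggle, minToggleLoc_eq hpw hmin hjk]

lemma splitMinToggle_eq (hpw : M.Pairwise Disjoint) (hmin : IsMinToggle M j)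
    (hjk : j ∈ M.getD k ∅) : splitMinToggle M = splitAt M k j := by
  rw [splitMinToggle, minToggleLoc_eq hpw hmin hjk]

lemma mapsTo_mergeMinToggle : Set.MapsTo mergeMinToggle (Splt n) (Fusd n) := by
  rintro L ⟨hc, j, hmin, k, hs : IsSplitToggleAt L j k⟩
  have hne := hc.1 _ (getD_mem hs.1)
  rw [mergeMinToggle_eq hc.2.1 hmin hs.2.1]
  exact ⟨hc.mergeAt hs.1, j, hmin.mergeAt hs hne, k, hs.isFusedToggleAt_mergeAt hne⟩

lemma mapsTo_splitMinToggle : Set.MapsTo splitMinToggle (Fusd n) (Splt n) := by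
  rintro M ⟨hc, j, hmin, k, hf : IsFusedToggleAt M j k⟩
  rw [splitMinToggle_eq hc.2.1 hmin hf.2.1]
  exact ⟨hc.splitAt hf.1 ⟨j, hf.2.1, le_rfl⟩ hf.2.2.1, j, hmin.splitAt hf, k,
    hf.isSplitToggleAt_splitAt⟩

lemma invOn_splitMinToggle_mergeMinToggle :
    Set.InvOn splitMinToggle mergeMinToggle (Splt n) (Fusd n) := by
  constructor
  · rintro L ⟨hc, j, hmin, k, hs : IsSplitToggleAt L j k⟩
    have hne := hc.1 _ (getD_mem hs.1)
    rw [mergeMinToggle_eq hc.2.1 hmin hs.2.1, splitMinToggle_eq (hc.mergeAt hs.1).2.1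
      (hmin.mergeAt hs hne) (hs.isFusedToggleAt_mergeAt hne).2.1]
    exact splitAt_mergeAt hs.1 hs.2.2.1 fun y hy => by have := hs.2.2.2 y hy; omega
  · rintro M ⟨hc, j, hmin, k, hf : IsFusedToggleAt M j k⟩
    have hc' := hc.splitAt hf.1 ⟨j, hf.2.1, le_rfl⟩ hf.2.2.1
    rw [splitMinToggle_eq hc.2.1 hmin hf.2.1, mergeMinToggle_eq hc'.2.1 (hmin.splitAt hf)
      hf.isSplitToggleAt_splitAt.2.1]
    exact mergeAt_splitAt hf.1

end PaperSetComp

open PaperSetComp in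
theorem split_fused_toggle_bijection_general (n : ℕ) :
    ∃ Φ : List (Finset ℕ) → List (Finset ℕ),
      (∀ L ∈ Splt n, ∀ j k : ℕ, IsMinToggle L j → k < L.length → j ∈ L.getD k ∅ →
        Φ L = mergeAt L k) ∧
      Set.BijOn Φ (Splt n) (Fusd n) ∧
      ∀ L ∈ Splt n, (Φ L).length = L.length - 1 := by
  refine ⟨mergeMinToggle, fun L hL j k hmin _ hjk => mergeMinToggle_eq hL.1.2.1 hmin hjk,
    invOn_splitMinToggle_mergeMinToggle.bijOn mapsTo_mergeMinToggle mapsTo_splitMinToggle, ?_⟩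
  rintro L ⟨hc, j, hmin, k, hs : IsSplitToggleAt L j k⟩
  rw [mergeMinToggle_eq hc.2.1 hmin hs.2.1, mergeAt_length hs.1]

open PaperSetComp in
/-- **Sign-reversing bijection of Section 5.2:** the map `Φ` sending a set composition
`(A₁,…,A_ℓ) ∈ Splt`, whose minimal toggle point `j*` satisfies `j* = max A_i`, to
`(A₁,…,A_{i-1}, A_i ∪ A_{i+1}, A_{i+2},…,A_ℓ)`, is a well-defined bijection from `Splt`
onto `Fusd` decreasing the number of blocks by exactly one. -/
theorem split_fused_toggle_bijection (n : ℕ) (hn : 1 ≤ n) :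
    ∃ Φ : List (Finset ℕ) → List (Finset ℕ),
      (∀ L ∈ Splt n, ∀ j k : ℕ, IsMinToggle L j → k < L.length → j ∈ L.getD k ∅ →
        Φ L = mergeAt L k) ∧
      Set.BijOn Φ (Splt n) (Fusd n) ∧
      ∀ L ∈ Splt n, (Φ L).length = L.length - 1 :=
  split_fused_toggle_bijection_general n
end
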